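/- A numerical semigroup S with multiplicity e and blowup B is additive (i.e., ord(u + e; S) = ord(u; S) + 1 for all u ∈ S) if and only if adj(S) = Ap(B; e), where adj(s) = s − ord(s;S)·e. -/

import Mathlib

open Finset

/-- The set of factorizations of `n` over the generating tuple `g`. -/
def Fac {t : ℕ} (g : Fin (t + 1) → ℕ) (n : ℕ) : Set (Fin (t + 1) → ℕ) :=
  {c | ∑ i, c i * g i = n}

/-- The numerical semigroup generated by the tuple `g`. -/
def Sg {t : ℕ} (g : Fin (t + 1) → ℕ) : Set ℕ :=
  {n | ∃ c : Fin (t + 1) → ℕ, ∑ i, c i * g i = n}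

/-- The order of `n`: the maximal length of a factorization of `n` over `g`. -/
noncomputable def ordOf {t : ℕ} (g : Fin (t + 1) → ℕ) (n : ℕ) : ℕ :=
  sSup {r | ∃ c ∈ Fac g n, ∑ i, c i = r}

/-- The minimal length of a factorization of `n` over `g`. -/
noncomputable def minordOf {t : ℕ} (g : Fin (t + 1) → ℕ) (n : ℕ) : ℕ :=
  sInf {r | ∃ c ∈ Fac g n, ∑ i, c i = r}

/-- The denumerant of `n` with respect to `g`. -/
noncomputable def denum {t : ℕ} (g : Fin (t + 1) → ℕ) (n : ℕ) : ℕ :=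
  (Fac g n).ncard

/-- The maximal denumerant of an element: the number of maximal-length factorizations. -/
noncomputable def dmaxEl {t : ℕ} (g : Fin (t + 1) → ℕ) (n : ℕ) : ℕ :=
  {c ∈ Fac g n | ∑ i, c i = ordOf g n}.ncard

/-- The maximal denumerant of the semigroup generated by `g`. -/
noncomputable def dmax {t : ℕ} (g : Fin (t + 1) → ℕ) : ℕ :=
  sSup {m | ∃ n ∈ Sg g, dmaxEl g n = m}

/-- The generating tuple `D` of the blowup: `{e, a₁ - e, …, a_t - e}`. -/
def blowD {t : ℕ} (g : Fin (t + 1) → ℕ) : Fin (t + 1) → ℕ :=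
  fun i => if i = 0 then g 0 else g i - g 0

/-- The adjustment of `n`:  `n - ord(n) * e`. -/
noncomputable def adj {t : ℕ} (g : Fin (t + 1) → ℕ) (n : ℕ) : ℕ :=
  n - ordOf g n * g 0

/-- The Apery set with respect to `u` of the semigroup generated by `g`. -/
def Ap {t : ℕ} (g : Fin (t + 1) → ℕ) (u : ℕ) : Set ℕ :=
  {w ∈ Sg g | ¬ ∃ b ∈ Sg g, w = b + u}

/-- `g` is the (strictly increasing) minimal generating tuple of a numerical semigroup
with multiplicity `g 0`. -/
structure IsNumSgp {t : ℕ} (g : Fin (t + 1) → ℕ) : Prop where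
  mono : StrictMono g
  pos : 0 < g 0
  gcd_eq_one : Finset.gcd Finset.univ g = 1
  minimal : ∀ i, ∀ c : Fin (t + 1) → ℕ, ∑ j, c j * g j = g i → c = Pi.single i 1

/-- `S` is additive: `ord(u + e) = ord(u) + 1` for all `u ∈ S`. -/
def IsAdditive {t : ℕ} (g : Fin (t + 1) → ℕ) : Prop :=
  ∀ u ∈ Sg g, ordOf g (u + g 0) = ordOf g u + 1

/-- Membership of an integer in a set of naturals. -/
def ZMem (T : Set ℕ) (z : ℤ) : Prop := 0 ≤ z ∧ z.toNat ∈ T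

/-- The Frobenius number: the largest integer not in `T`. -/
noncomputable def Frob (T : Set ℕ) : ℤ := sSup {z : ℤ | ¬ ZMem T z}

/-- `T` is symmetric: whenever `x + y = F(T)`, exactly one of `x`, `y` lies in `T`. -/
def Symm (T : Set ℕ) : Prop := ∀ x y : ℤ, x + y = Frob T → (ZMem T x ↔ ¬ ZMem T y)

/-- An abstract numerical semigroup. -/
structure IsNumSemigroup (T : Set ℕ) : Prop where
  zero_mem : 0 ∈ T
  add_mem : ∀ a ∈ T, ∀ b ∈ T, a + b ∈ T
  cofinite : Tᶜ.Finite

/-- The Apery set of an abstract numerical semigroup. -/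
def ApS (T : Set ℕ) (u : ℕ) : Set ℕ := {w ∈ T | ¬ ∃ b ∈ T, w = b + u}


/-!
Reading a maximal factorization of `n ∈ S` over the blowup generators shows `adj n ∈ B`, and
lifting a factorization over `B` back to `S` shows that every `b ∈ B` is `adj n + k e` with
`n ∈ S`. Hence `Ap(B;e) ⊆ adj(S)` always, and `adj(S) ⊆ Ap(B;e)` says that no `adj u` is of
the form `adj v + k e` with `k > 0`. Since `adj u = adj (u + e) + (ord(u + e) - ord u - 1) e`,
this forces additivity. Conversely, under additivity `ord(u + k e) = ord u + k`, so an identity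
`adj n = adj m + (k + 1) e` would give the element `n + ord(m) e = m + (ord n + k + 1) e`
two different orders.
-/

section
variable {t : ℕ}

lemma sum_add_single_mul (c f : Fin (t + 1) → ℕ) (j : Fin (t + 1)) (k : ℕ) :
    ∑ i, (c + Pi.single j k : Fin (t + 1) → ℕ) i * f i = ∑ i, c i * f i + k * f j := by
  simp [add_mul, Finset.sum_add_distrib, Pi.single_apply, ite_mul]

lemma sum_add_single (c : Fin (t + 1) → ℕ) (j : Fin (t + 1)) (k : ℕ) :
    ∑ i, (c + Pi.single j k : Fin (t + 1) → ℕ) i = ∑ i, c i + k := by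
  simp [Finset.sum_add_distrib]

lemma update_zero_add_single (c : Fin (t + 1) → ℕ) (j : Fin (t + 1)) :
    Function.update c j 0 + Pi.single j (c j) = c := by
  ext i
  by_cases h : i = j <;> simp [h]

lemma add_mul_mem_Sg {f : Fin (t + 1) → ℕ} {b : ℕ} (hb : b ∈ Sg f) (j : Fin (t + 1)) (k : ℕ) :
    b + k * f j ∈ Sg f := by
  obtain ⟨c, rfl⟩ := hb
  exact ⟨c + Pi.single j k, sum_add_single_mul c f j k⟩

variable {g : Fin (t + 1) → ℕ}

lemma bddAbove_lengths (hpos : ∀ i, 0 < g i) (n : ℕ) :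
    BddAbove {r | ∃ c ∈ Fac g n, ∑ i, c i = r} := by
  refine ⟨n, ?_⟩
  rintro _ ⟨c, hc, rfl⟩
  calc ∑ i, c i ≤ ∑ i, c i * g i :=
        Finset.sum_le_sum fun i _ => Nat.le_mul_of_pos_right _ (hpos i)
    _ = n := hc

lemma le_ordOf (hpos : ∀ i, 0 < g i) {n : ℕ} {c : Fin (t + 1) → ℕ}
    (hc : ∑ i, c i * g i = n) : ∑ i, c i ≤ ordOf g n :=
  le_csSup (bddAbove_lengths hpos n) ⟨c, hc, rfl⟩

lemma exists_sum_eq_ordOf (hpos : ∀ i, 0 < g i) {n : ℕ} (hn : n ∈ Sg g) :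
    ∃ c : Fin (t + 1) → ℕ, ∑ i, c i * g i = n ∧ ∑ i, c i = ordOf g n := by
  obtain ⟨c, hc⟩ := hn
  obtain ⟨c', hc', hlen⟩ :=
    Nat.sSup_mem (s := {r | ∃ c ∈ Fac g n, ∑ i, c i = r}) ⟨_, c, hc, rfl⟩ (bddAbove_lengths hpos n)
  exact ⟨c', hc', hlen⟩

lemma add_le_ordOf_add_mul (hpos : ∀ i, 0 < g i) {u : ℕ} (hu : u ∈ Sg g) (j : Fin (t + 1)) (k : ℕ) :
    ordOf g u + k ≤ ordOf g (u + k * g j) := by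
  obtain ⟨c, hc, hlen⟩ := exists_sum_eq_ordOf hpos hu
  have := le_ordOf hpos (n := u + k * g j) (c := c + Pi.single j k)
    (by rw [sum_add_single_mul, hc])
  rwa [sum_add_single, hlen] at this

lemma adj_add_ordOf_mul (hpos : ∀ i, 0 < g i) (hle : ∀ i, g 0 ≤ g i) {n : ℕ} (hn : n ∈ Sg g) :
    adj g n + ordOf g n * g 0 = n := by
  refine Nat.sub_add_cancel ?_
  obtain ⟨c, hc, hlen⟩ := exists_sum_eq_ordOf hpos hn
  calc ordOf g n * g 0 = ∑ i, c i * g 0 := by rw [← hlen, Finset.sum_mul]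
    _ ≤ ∑ i, c i * g i := Finset.sum_le_sum fun i _ => Nat.mul_le_mul_left _ (hle i)
    _ = n := hc

lemma sum_mul_blowD_add (hle : ∀ i, g 0 ≤ g i) (c : Fin (t + 1) → ℕ) :
    ∑ i, c i * blowD g i + (∑ i, c i) * g 0 = ∑ i, c i * g i + c 0 * g 0 := by
  have hterm (i : Fin (t + 1)) :
      c i * blowD g i + c i * g 0 = c i * g i + if i = 0 then c i * g 0 else 0 := by
    by_cases hi : i = 0
    · subst hi; simp [blowD]
    · simp only [blowD, hi, if_false, add_zero, ← mul_add, Nat.sub_add_cancel (hle i)]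
  rw [Finset.sum_mul, ← Finset.sum_add_distrib, Finset.sum_congr rfl fun i _ => hterm i,
    Finset.sum_add_distrib, Finset.sum_ite_eq']
  simp

lemma adj_mem_Sg_blowD (hpos : ∀ i, 0 < g i) (hle : ∀ i, g 0 ≤ g i) {n : ℕ} (hn : n ∈ Sg g) :
    adj g n ∈ Sg (blowD g) := by
  obtain ⟨c, hc, hlen⟩ := exists_sum_eq_ordOf hpos hn
  set c' := Function.update c 0 0
  have hsplit := update_zero_add_single c 0
  have hc' : ∑ i, c' i * g i + c 0 * g 0 = n := by
    rw [← sum_add_single_mul, hsplit, hc]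
  have hlen' : ∑ i, c' i + c 0 = ordOf g n := by
    rw [← sum_add_single, hsplit, hlen]
  have hid := sum_mul_blowD_add hle c'
  have hadj := adj_add_ordOf_mul hpos hle hn
  refine ⟨c', ?_⟩
  simp only [c', Function.update_self, zero_mul, add_zero] at hid
  rw [← hlen'] at hadj
  linarith

lemma mem_Sg_blowD_iff (hpos : ∀ i, 0 < g i) (hle : ∀ i, g 0 ≤ g i) {b : ℕ} :
    b ∈ Sg (blowD g) ↔ ∃ n ∈ Sg g, ∃ k, b = adj g n + k * g 0 := by
  constructor
  · rintro ⟨d, rfl⟩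
    have hn : ∑ i, d i * g i ∈ Sg g := ⟨d, rfl⟩
    obtain ⟨j, hj⟩ := Nat.exists_eq_add_of_le (le_ordOf hpos (c := d) rfl)
    have hid := sum_mul_blowD_add hle d
    have hadj := adj_add_ordOf_mul hpos hle hn
    refine ⟨_, hn, j + d 0, ?_⟩
    rw [hj] at hadj
    linarith
  · rintro ⟨n, hn, k, rfl⟩
    simpa [blowD] using add_mul_mem_Sg (adj_mem_Sg_blowD hpos hle hn) 0 k

lemma adj_add_mul_not_mem_Ap (hpos : ∀ i, 0 < g i) (hle : ∀ i, g 0 ≤ g i) {n k : ℕ}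
    (hn : n ∈ Sg g) (hk : k ≠ 0) : adj g n + k * g 0 ∉ Ap (blowD g) (g 0) := by
  obtain ⟨j, rfl⟩ := Nat.exists_eq_add_one_of_ne_zero hk
  rintro ⟨-, hAp⟩
  exact hAp ⟨adj g n + j * g 0, (mem_Sg_blowD_iff hpos hle).2 ⟨n, hn, j, rfl⟩, by ring⟩

lemma Ap_subset_image_adj (hpos : ∀ i, 0 < g i) (hle : ∀ i, g 0 ≤ g i) :
    Ap (blowD g) (g 0) ⊆ adj g '' Sg g := by
  intro w hw
  obtain ⟨n, hn, k, rfl⟩ := (mem_Sg_blowD_iff hpos hle).1 hw.1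
  obtain rfl : k = 0 := by
    by_contra hk
    exact adj_add_mul_not_mem_Ap hpos hle hn hk hw
  exact ⟨n, hn, by simp⟩

lemma IsAdditive.ordOf_add_mul (h : IsAdditive g) {u : ℕ} (hu : u ∈ Sg g) (k : ℕ) :
    ordOf g (u + k * g 0) = ordOf g u + k := by
  induction k with
  | zero => simp
  | succ k ih =>
    rw [add_one_mul, ← add_assoc, h _ (add_mul_mem_Sg hu 0 k), ih, add_assoc]

lemma IsAdditive.adj_mem_Ap (h : IsAdditive g) (hpos : ∀ i, 0 < g i) (hle : ∀ i, g 0 ≤ g i)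
    {n : ℕ} (hn : n ∈ Sg g) : adj g n ∈ Ap (blowD g) (g 0) := by
  refine ⟨adj_mem_Sg_blowD hpos hle hn, ?_⟩
  rintro ⟨b, hb, hnb⟩
  obtain ⟨m, hm, k, rfl⟩ := (mem_Sg_blowD_iff hpos hle).1 hb
  have hsame : n + ordOf g m * g 0 = m + (ordOf g n + k + 1) * g 0 := by
    have := adj_add_ordOf_mul hpos hle hn
    have := adj_add_ordOf_mul hpos hle hm
    linarith
  have := congrArg (ordOf g) hsame
  rw [h.ordOf_add_mul hn, h.ordOf_add_mul hm] at this
  omega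

lemma isAdditive_of_image_adj_subset (hpos : ∀ i, 0 < g i) (hle : ∀ i, g 0 ≤ g i)
    (h : adj g '' Sg g ⊆ Ap (blowD g) (g 0)) : IsAdditive g := by
  intro u hu
  have hue : u + g 0 ∈ Sg g := by simpa using add_mul_mem_Sg hu 0 1
  have hge := add_le_ordOf_add_mul hpos hu 0 1
  rw [one_mul] at hge
  obtain ⟨k, hk⟩ := Nat.exists_eq_add_of_le hge
  have hadj : adj g u = adj g (u + g 0) + k * g 0 := by
    have := adj_add_ordOf_mul hpos hle hu
    have := adj_add_ordOf_mul hpos hle hue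
    rw [hk] at this
    linarith
  obtain rfl : k = 0 := by
    by_contra hk0
    exact adj_add_mul_not_mem_Ap hpos hle hue hk0 (hadj ▸ h ⟨u, hu, rfl⟩)
  exact hk

end

/-- Proposition 4.8: `S` is additive iff `adj(S) = Ap(B;e)`. -/
theorem stmt12 {t : ℕ} (g : Fin (t + 1) → ℕ) (hS : IsNumSgp g) :
    IsAdditive g ↔ adj g '' Sg g = Ap (blowD g) (g 0) := by
  have hle : ∀ i, g 0 ≤ g i := fun i => hS.mono.monotone (Fin.zero_le i)
  have hpos : ∀ i, 0 < g i := fun i => hS.pos.trans_le (hle i)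
  refine ⟨fun h => ?_, fun h => isAdditive_of_image_adj_subset hpos hle h.subset⟩
  exact Set.Subset.antisymm (Set.image_subset_iff.2 fun n hn => h.adj_mem_Ap hpos hle hn)
    (Ap_subset_image_adj hpos hle)
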